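/- arXiv:2205.14213 — 7 statements merged into one kernel-verified Lean document; each statement's English description precedes it below -/
import Mathlib

section
/- If a deterministic object type T is n-recording (for n ≥ 2), then T is n-discerning. Concretely: if there exist a state q0, a partition of process indices {1,...,n} into two nonempty teams A and B, and operations op_1,...,op_n such that Q_A ∩ Q_B = ∅ (plus the two initial-state conditions), then the same q0, partition, and operations witness that T is n-discerning, i.e., R_{A,j} ∩ R_{B,j} = ∅ for every j. -/
/-- A deterministic shared object type: states, operations, responses, and a
deterministic transition function giving new state and response. -/
structure DetType where
  State : Type
  Op : Type
  Resp : Type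
  tr : Op → State → State × Resp

namespace DetType

/-- Apply a sequence of operations to a state. -/
def applySeq (T : DetType) (l : List T.Op) (q : T.State) : T.State :=
  l.foldl (fun s o => (T.tr o s).1) q

/-- `Q_X(q0, op)`: states reachable from `q0` by applying `op_{i_1},...,op_{i_α}`
for a sequence of distinct indices whose first index is in `X`. -/
def QSet (T : DetType) {n : ℕ} (q0 : T.State) (op : Fin n → T.Op)
    (X : Finset (Fin n)) : Set T.State :=
  { q | ∃ l : List (Fin n), l.Nodup ∧ (∃ i ∈ X, l.head? = some i) ∧
      T.applySeq (l.map op) q0 = q }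

/-- `R_{X,j}`: pairs (response of `op_j`, final state) arising from sequences of
distinct indices containing `j` whose first index is in `X`, applied from `q0`. -/
def RSet (T : DetType) {n : ℕ} (q0 : T.State) (op : Fin n → T.Op)
    (X : Finset (Fin n)) (j : Fin n) : Set (T.Resp × T.State) :=
  { p | ∃ l1 l2 : List (Fin n), (l1 ++ j :: l2).Nodup ∧
      (∃ i ∈ X, (l1 ++ j :: l2).head? = some i) ∧
      p.1 = (T.tr (op j) (T.applySeq (l1.map op) q0)).2 ∧
      p.2 = T.applySeq ((l1 ++ j :: l2).map op) q0 }

/-- `T` is `n`-discerning. -/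
def isDiscerning (T : DetType) (n : ℕ) : Prop :=
  ∃ (q0 : T.State) (A B : Finset (Fin n)) (op : Fin n → T.Op),
    A.Nonempty ∧ B.Nonempty ∧ Disjoint A B ∧ A ∪ B = Finset.univ ∧
    ∀ j, T.RSet q0 op A j ∩ T.RSet q0 op B j = ∅

/-- `T` is `n`-recording. -/
def isRecording (T : DetType) (n : ℕ) : Prop :=
  ∃ (q0 : T.State) (A B : Finset (Fin n)) (op : Fin n → T.Op),
    A.Nonempty ∧ B.Nonempty ∧ Disjoint A B ∧ A ∪ B = Finset.univ ∧
    T.QSet q0 op A ∩ T.QSet q0 op B = ∅ ∧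
    (q0 ∉ T.QSet q0 op A ∨ B.card = 1) ∧
    (q0 ∉ T.QSet q0 op B ∨ A.card = 1)

end DetType

namespace DetType

variable (T : DetType) {n : ℕ} (q0 : T.State) (op : Fin n → T.Op) (X : Finset (Fin n))

theorem snd_mem_QSet_of_mem_RSet {j : Fin n} {p : T.Resp × T.State}
    (hp : p ∈ T.RSet q0 op X j) : p.2 ∈ T.QSet q0 op X := by
  obtain ⟨l1, l2, hnd, hhd, -, hq⟩ := hp
  exact ⟨l1 ++ j :: l2, hnd, hhd, hq.symm⟩

theorem RSet_inter_eq_empty_of_QSet_inter_eq_empty {A B : Finset (Fin n)}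
    (h : T.QSet q0 op A ∩ T.QSet q0 op B = ∅) (j : Fin n) :
    T.RSet q0 op A j ∩ T.RSet q0 op B j = ∅ :=
  Set.eq_empty_of_forall_notMem fun _ ⟨hpA, hpB⟩ =>
    h.subset ⟨T.snd_mem_QSet_of_mem_RSet q0 op A hpA, T.snd_mem_QSet_of_mem_RSet q0 op B hpB⟩

end DetType

open DetType

theorem stmt0_general (T : DetType) (n : ℕ) (q0 : T.State)
    (A B : Finset (Fin n)) (op : Fin n → T.Op)
    (h1 : T.QSet q0 op A ∩ T.QSet q0 op B = ∅) :
    ∀ j, T.RSet q0 op A j ∩ T.RSet q0 op B j = ∅ :=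
  T.RSet_inter_eq_empty_of_QSet_inter_eq_empty q0 op h1

/-- If a deterministic type is n-recording (n ≥ 2), the same witness shows it is
n-discerning: `R_{A,j} ∩ R_{B,j} = ∅` for every `j`. -/
theorem stmt0 (T : DetType) (n : ℕ) (hn : 2 ≤ n) (q0 : T.State)
    (A B : Finset (Fin n)) (op : Fin n → T.Op)
    (hA : A.Nonempty) (hB : B.Nonempty) (hAB : Disjoint A B) (hU : A ∪ B = Finset.univ)
    (h1 : T.QSet q0 op A ∩ T.QSet q0 op B = ∅)
    (h2 : q0 ∉ T.QSet q0 op A ∨ B.card = 1)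
    (h3 : q0 ∉ T.QSet q0 op B ∨ A.card = 1) :
    ∀ j, T.RSet q0 op A j ∩ T.RSet q0 op B j = ∅ :=
  stmt0_general T n q0 A B op h1
end

section
/- If a deterministic object type T is n-recording for some n ≥ 3, then T is (n-1)-recording. Specifically, given a witness (q0, A, B, op_1,...,op_n) for n-recording, removing one process from the larger team (and keeping the same initial state and assigned operations for the remaining n-1 processes) yields a witness for (n-1)-recording. -/
open DetType

theorem Fin.card_preimage_succAbove {n : ℕ} (a : Fin (n + 1)) (s : Finset (Fin (n + 1))) :
    (s.preimage a.succAbove Fin.succAbove_right_injective.injOn).card = (s.erase a).card := by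
  rw [Finset.card_preimage]
  congr 1
  ext; simp [and_comm]

namespace DetType

theorem QSet_comp_subset (T : DetType) {m n : ℕ} (q0 : T.State) (op : Fin n → T.Op)
    {e : Fin m → Fin n} (he : Function.Injective e) (X : Finset (Fin n)) :
    T.QSet q0 (op ∘ e) (X.preimage e he.injOn) ⊆ T.QSet q0 op X := by
  rintro q ⟨l, hnd, ⟨i, hi, hhead⟩, rfl⟩
  refine ⟨l.map e, hnd.map he, ⟨e i, Finset.mem_preimage.mp hi, ?_⟩, by rw [List.map_map]⟩
  rw [List.head?_map, hhead, Option.map_some]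

structure IsRecordingWitness (T : DetType) {n : ℕ} (q0 : T.State) (A B : Finset (Fin n))
    (op : Fin n → T.Op) : Prop where
  nonempty_left : A.Nonempty
  nonempty_right : B.Nonempty
  disjoint : Disjoint A B
  union_eq_univ : A ∪ B = Finset.univ
  QSet_inter_eq_empty : T.QSet q0 op A ∩ T.QSet q0 op B = ∅
  left_condition : q0 ∉ T.QSet q0 op A ∨ B.card = 1
  right_condition : q0 ∉ T.QSet q0 op B ∨ A.card = 1

theorem isRecording_iff (T : DetType) (n : ℕ) :
    isRecording T n ↔ ∃ q0 A B op, T.IsRecordingWitness (n := n) q0 A B op :=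
  ⟨fun ⟨q0, A, B, op, hA, hB, hd, hu, hQ, hl, hr⟩ => ⟨q0, A, B, op, ⟨hA, hB, hd, hu, hQ, hl, hr⟩⟩,
    fun ⟨q0, A, B, op, ⟨hA, hB, hd, hu, hQ, hl, hr⟩⟩ => ⟨q0, A, B, op, hA, hB, hd, hu, hQ, hl, hr⟩⟩

namespace IsRecordingWitness

variable {T : DetType} {q0 : T.State}

theorem symm {n : ℕ} {A B : Finset (Fin n)} {op : Fin n → T.Op}
    (h : T.IsRecordingWitness q0 A B op) : T.IsRecordingWitness q0 B A op where
  nonempty_left := h.nonempty_right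
  nonempty_right := h.nonempty_left
  disjoint := h.disjoint.symm
  union_eq_univ := Finset.union_comm A B ▸ h.union_eq_univ
  QSet_inter_eq_empty := Set.inter_comm _ _ ▸ h.QSet_inter_eq_empty
  left_condition := h.right_condition
  right_condition := h.left_condition

theorem preimage_succAbove {m : ℕ} {A B : Finset (Fin (m + 1))} {op : Fin (m + 1) → T.Op}
    (h : T.IsRecordingWitness q0 A B op) {a : Fin (m + 1)} (ha : a ∈ A) (hA : 2 ≤ A.card) :
    T.IsRecordingWitness q0 (A.preimage a.succAbove Fin.succAbove_right_injective.injOn)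
      (B.preimage a.succAbove Fin.succAbove_right_injective.injOn) (op ∘ a.succAbove) := by
  have hcardA := Fin.card_preimage_succAbove a A
  have hcardB := Fin.card_preimage_succAbove a B
  rw [Finset.card_erase_of_mem ha] at hcardA
  rw [Finset.erase_eq_of_notMem (Finset.disjoint_left.mp h.disjoint ha)] at hcardB
  have hsubA := QSet_comp_subset T q0 op (Fin.succAbove_right_injective (p := a)) A
  have hsubB := QSet_comp_subset T q0 op (Fin.succAbove_right_injective (p := a)) B
  exact
    { nonempty_left := Finset.card_pos.mp (by omega)
      nonempty_right := Finset.card_pos.mp (hcardB ▸ h.nonempty_right.card_pos)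
      disjoint := Finset.disjoint_preimage h.disjoint
      union_eq_univ := by rw [← Finset.preimage_union Fin.succAbove_right_injective.injOn, h.union_eq_univ,
        Finset.preimage_univ]
      QSet_inter_eq_empty :=
        Set.subset_eq_empty (Set.inter_subset_inter hsubA hsubB) h.QSet_inter_eq_empty
      left_condition := h.left_condition.imp (fun hq0 hq => hq0 (hsubA hq)) hcardB.trans
      right_condition := .inl fun hq => h.right_condition.resolve_right (by omega) (hsubB hq) }

end IsRecordingWitness

end DetType

/-- If a deterministic type is n-recording for n ≥ 3, it is (n-1)-recording. -/
theorem stmt1 (T : DetType) (n : ℕ) (hn : 3 ≤ n) (h : isRecording T n) :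
    isRecording T (n - 1) := by
  obtain ⟨m, rfl⟩ : ∃ m, n = m + 1 := ⟨n - 1, by omega⟩
  obtain ⟨q0, A, B, op, hw⟩ := (isRecording_iff T _).mp h
  have hcard : A.card + B.card = m + 1 := by
    rw [← Finset.card_union_of_disjoint hw.disjoint, hw.union_eq_univ, Finset.card_fin]
  rw [Nat.add_sub_cancel, isRecording_iff]
  rcases le_or_gt 2 A.card with hA | hA
  · obtain ⟨a, ha⟩ := hw.nonempty_left
    exact ⟨_, _, _, _, hw.preimage_succAbove ha hA⟩
  · obtain ⟨b, hb⟩ := hw.nonempty_right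
    exact ⟨_, _, _, _, hw.symm.preimage_succAbove hb (by omega)⟩
end

section
/- Let T be a deterministic type and suppose q0, nonempty teams A, B partitioning {1,...,n}, and operations op_1,...,op_n satisfy the n-recording property. Let X ∈ {A,B} with q0 ∉ Q_X. If i_1,...,i_α is a sequence of distinct process indices such that applying op_{i_1},...,op_{i_α} takes an object of type T from state q0 back to state q0, then every index of a process on team X appears in the sequence i_1,...,i_α. -/
open DetType

/-!
Suppose some `i ∈ X` is missing from a sequence `l` that returns the object to `q0`. The first
index of `l` cannot lie in `X` (otherwise `q0 ∈ Q_X`), so it lies in the other team `Y`. Then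
appending `i` to `l` is a sequence of distinct indices starting in `Y` that reaches the same state
as `op_i` applied alone to `q0`, which lies in `Q_X`; this contradicts `Q_X ∩ Q_Y = ∅`.
-/

namespace DetType

variable (T : DetType) {n : ℕ} (q0 : T.State) (op : Fin n → T.Op)

theorem applySeq_append (l₁ l₂ : List T.Op) (q : T.State) :
    T.applySeq (l₁ ++ l₂) q = T.applySeq l₂ (T.applySeq l₁ q) :=
  List.foldl_append ..

theorem applySeq_mem_QSet {X : Finset (Fin n)} {i : Fin n} {l : List (Fin n)} (hi : i ∈ X)
    (hl : (i :: l).Nodup) : T.applySeq ((i :: l).map op) q0 ∈ T.QSet q0 op X :=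
  ⟨i :: l, hl, ⟨i, hi, rfl⟩, rfl⟩

theorem mem_of_applySeq_eq_self {X Y : Finset (Fin n)} (hU : X ∪ Y = Finset.univ)
    (hXY : T.QSet q0 op X ∩ T.QSet q0 op Y = ∅) (hq0 : q0 ∉ T.QSet q0 op X)
    {l : List (Fin n)} (hl : l.Nodup) (hne : l ≠ []) (hret : T.applySeq (l.map op) q0 = q0) :
    ∀ i ∈ X, i ∈ l := by
  intro i hi
  by_contra hil
  obtain ⟨j, rest, rfl⟩ := List.exists_cons_of_ne_nil hne
  have hjY : j ∈ Y := by
    rcases Finset.mem_union.mp (hU ▸ Finset.mem_univ j) with hjX | hjY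
    · have h := T.applySeq_mem_QSet q0 op hjX hl
      rw [hret] at h
      exact absurd h hq0
    · exact hjY
  have hX' : (T.tr (op i) q0).1 ∈ T.QSet q0 op X :=
    T.applySeq_mem_QSet q0 op hi (List.nodup_singleton i)
  have hY' : (T.tr (op i) q0).1 ∈ T.QSet q0 op Y := by
    have hnd : (j :: rest ++ [i]).Nodup :=
      List.nodup_append_comm.mp (List.nodup_cons.mpr ⟨hil, hl⟩ : ([i] ++ j :: rest).Nodup)
    have h := T.applySeq_mem_QSet q0 op (l := rest ++ [i]) hjY hnd
    rwa [← List.cons_append, List.map_append, applySeq_append, hret] at h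
  exact Set.eq_empty_iff_forall_notMem.mp hXY _ ⟨hX', hY'⟩

end DetType

open DetType

theorem stmt2_general (T : DetType) (n : ℕ) (q0 : T.State)
    (A B : Finset (Fin n)) (op : Fin n → T.Op)
    (hU : A ∪ B = Finset.univ)
    (h1 : T.QSet q0 op A ∩ T.QSet q0 op B = ∅)
    (X : Finset (Fin n)) (hX : X = A ∨ X = B) (hq0 : q0 ∉ T.QSet q0 op X)
    (l : List (Fin n)) (hl : l.Nodup) (hne : l ≠ [])
    (hret : T.applySeq (l.map op) q0 = q0) :
    ∀ i ∈ X, i ∈ l := by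
  rcases hX with rfl | rfl
  · exact T.mem_of_applySeq_eq_self q0 op hU h1 hq0 hl hne hret
  · exact T.mem_of_applySeq_eq_self q0 op (Finset.union_comm A X ▸ hU)
      (Set.inter_comm _ _ ▸ h1) hq0 hl hne hret

/-- Lemma (B-steps): under the n-recording conditions, if `q0 ∉ Q_X` for a team
`X ∈ {A,B}` and a sequence of distinct indices takes the object from `q0` back to
`q0`, then every member of `X` appears in the sequence. -/
theorem stmt2 (T : DetType) (n : ℕ) (q0 : T.State)
    (A B : Finset (Fin n)) (op : Fin n → T.Op)
    (hA : A.Nonempty) (hB : B.Nonempty) (hAB : Disjoint A B) (hU : A ∪ B = Finset.univ)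
    (h1 : T.QSet q0 op A ∩ T.QSet q0 op B = ∅)
    (h2 : q0 ∉ T.QSet q0 op A ∨ B.card = 1)
    (h3 : q0 ∉ T.QSet q0 op B ∨ A.card = 1)
    (X : Finset (Fin n)) (hX : X = A ∨ X = B) (hq0 : q0 ∉ T.QSet q0 op X)
    (l : List (Fin n)) (hl : l.Nodup) (hne : l ≠ [])
    (hret : T.applySeq (l.map op) q0 = q0) :
    ∀ i ∈ X, i ∈ l :=
  stmt2_general T n q0 A B op hU h1 X hX hq0 l hl hne hret
end

section
/- For n ≥ 4, if a deterministic object type T is n-discerning, then T is (n-2)-recording. More precisely, if q0, a partition of {1,...,n} into nonempty teams A and B, and operations op_1,...,op_n witness that T is n-discerning, and the indices are arranged so that {1,...,n-2} contains at least one member of each of A and B while {n-1, n} contains at least one member of each team of size greater than 1, then q0 together with the teams A' = A ∩ {1,...,n-2}, B' = B ∩ {1,...,n-2} and operations op_1,...,op_{n-2} witness that T is (n-2)-recording. -/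
open DetType

/-!
Runs of the first `n - 2` operations never use the last two indices, so any `op_j` with `j`
among them can be appended to such a run. If an `A'`-run and a `B'`-run reached the same
state, appending `op_{n-1}` to both would put one pair into `R_{A,n-1} ∩ R_{B,n-1}`. If
`|B| > 1`, some `b ∈ B` is among the last two indices; an `A'`-run returning to `q0` followed
by `op_b` would then be indistinguishable from the `B`-run consisting of `op_b` alone.
-/

namespace DetType

/-- The sequences of indices over which `QSet` and `RSet` range. -/
def IsRun {n : ℕ} (X : Finset (Fin n)) (l : List (Fin n)) : Prop :=
  l.Nodup ∧ ∃ i ∈ X, l.head? = some i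

variable {T : DetType} {m n : ℕ} {q0 : T.State} {op : Fin n → T.Op}

theorem swap_tr_mem_RSet {X : Finset (Fin n)} {j : Fin n} {l : List (Fin n)}
    (hl : IsRun X (l ++ [j])) :
    (T.tr (op j) (T.applySeq (l.map op) q0)).swap ∈ T.RSet q0 op X j :=
  ⟨l, [], hl.1, hl.2, rfl, by simp [applySeq, List.foldl_append]⟩

theorem applySeq_ne_of_RSet_inter_eq_empty {A B : Finset (Fin n)} {j : Fin n}
    (hdisc : T.RSet q0 op A j ∩ T.RSet q0 op B j = ∅) {lA lB : List (Fin n)}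
    (hA : IsRun A (lA ++ [j])) (hB : IsRun B (lB ++ [j])) :
    T.applySeq (lA.map op) q0 ≠ T.applySeq (lB.map op) q0 := by
  intro heq
  have hmemB := swap_tr_mem_RSet (q0 := q0) (op := op) hB
  rw [← heq] at hmemB
  exact (Set.eq_empty_iff_forall_notMem.1 hdisc) _ ⟨swap_tr_mem_RSet hA, hmemB⟩

section Restrict

variable (h : m ≤ n) {op' : Fin m → T.Op} {X' : Finset (Fin m)} {X : Finset (Fin n)}

theorem isRun_map_castLE_append (hX : ∀ i ∈ X', Fin.castLE h i ∈ X) {l : List (Fin m)}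
    (hl : IsRun X' l) {j : Fin n} (hj : m ≤ j) : IsRun X (l.map (Fin.castLE h) ++ [j]) := by
  obtain ⟨hnd, i, hi, hhead⟩ := hl
  refine ⟨?_, Fin.castLE h i, hX i hi, ?_⟩
  · refine List.nodup_append.2 ⟨hnd.map (Fin.castLE_injective h), List.nodup_singleton j, ?_⟩
    simp only [List.mem_map, List.mem_singleton]
    rintro _ ⟨k, -, rfl⟩ _ rfl hk
    have := congrArg Fin.val hk
    simp only [Fin.val_castLE] at this
    omega
  · cases l with
    | nil => simp at hhead
    | cons a t => simpa using hhead

theorem exists_run_of_mem_QSet_castLE (hop : ∀ i, op' i = op (Fin.castLE h i))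
    (hX : ∀ i ∈ X', Fin.castLE h i ∈ X) {q : T.State} (hq : q ∈ T.QSet q0 op' X') :
    ∃ L : List (Fin n), (∀ j : Fin n, m ≤ j → IsRun X (L ++ [j])) ∧
      T.applySeq (L.map op) q0 = q := by
  obtain ⟨l, hnd, hhead, rfl⟩ := hq
  refine ⟨l.map (Fin.castLE h), fun j hj => isRun_map_castLE_append h hX ⟨hnd, hhead⟩ hj, ?_⟩
  simp only [List.map_map, Function.comp_def, ← hop]

theorem QSet_castLE_inter_eq_empty (hlt : m < n) (hop : ∀ i, op' i = op (Fin.castLE h i))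
    {A' B' : Finset (Fin m)} {A B : Finset (Fin n)}
    (hdisc : T.RSet q0 op A ⟨m, hlt⟩ ∩ T.RSet q0 op B ⟨m, hlt⟩ = ∅)
    (hA : ∀ i ∈ A', Fin.castLE h i ∈ A) (hB : ∀ i ∈ B', Fin.castLE h i ∈ B) :
    T.QSet q0 op' A' ∩ T.QSet q0 op' B' = ∅ := by
  refine Set.eq_empty_iff_forall_notMem.2 fun q ⟨hqA, hqB⟩ => ?_
  obtain ⟨LA, hrunA, rfl⟩ := exists_run_of_mem_QSet_castLE h hop hA hqA
  obtain ⟨LB, hrunB, hLB⟩ := exists_run_of_mem_QSet_castLE h hop hB hqB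
  exact applySeq_ne_of_RSet_inter_eq_empty hdisc (hrunA _ le_rfl) (hrunB _ le_rfl) hLB.symm

theorem notMem_QSet_castLE_of_mem (hop : ∀ i, op' i = op (Fin.castLE h i))
    {A' : Finset (Fin m)} {A B : Finset (Fin n)} {b : Fin n}
    (hdisc : T.RSet q0 op A b ∩ T.RSet q0 op B b = ∅) (hA : ∀ i ∈ A', Fin.castLE h i ∈ A)
    (hb : b ∈ B) (hmb : m ≤ b) : q0 ∉ T.QSet q0 op' A' := by
  intro hq
  obtain ⟨LA, hrunA, hLA⟩ := exists_run_of_mem_QSet_castLE h hop hA hq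
  have hrunB : IsRun B ([] ++ [b]) := ⟨List.nodup_singleton b, b, hb, rfl⟩
  exact applySeq_ne_of_RSet_inter_eq_empty hdisc (hrunA b hmb) hrunB hLA

theorem card_le_card_of_castLE_mem (hX : ∀ i ∈ X', Fin.castLE h i ∈ X) : X'.card ≤ X.card :=
  Finset.card_le_card_of_injOn _ hX (Fin.castLE_injective h).injOn

theorem notMem_QSet_castLE_or_card_eq_one (hop : ∀ i, op' i = op (Fin.castLE h i))
    {A' B' : Finset (Fin m)} {A B : Finset (Fin n)}
    (hdisc : ∀ j, T.RSet q0 op A j ∩ T.RSet q0 op B j = ∅)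
    (hA : ∀ i ∈ A', Fin.castLE h i ∈ A) (hB : ∀ i ∈ B', Fin.castLE h i ∈ B)
    (hB'ne : B'.Nonempty) (hBhigh : 1 < B.card → ∃ i ∈ B, m ≤ (i : ℕ)) :
    q0 ∉ T.QSet q0 op' A' ∨ B'.card = 1 := by
  by_cases hBcard : 1 < B.card
  · obtain ⟨b, hb, hmb⟩ := hBhigh hBcard
    exact Or.inl (notMem_QSet_castLE_of_mem h hop (hdisc b) hA hb hmb)
  · have := card_le_card_of_castLE_mem h hB
    have := hB'ne.card_pos
    exact Or.inr (by omega)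

end Restrict

end DetType

/-- For n ≥ 4: an n-discerning witness, with the indices arranged so that
`{1,...,n-2}` meets both teams and the last two indices meet every team of size
more than one, yields an (n-2)-recording witness by restricting the teams and
operations to the first n-2 indices. -/
theorem stmt3 (T : DetType) (n : ℕ) (hn : 4 ≤ n) (q0 : T.State)
    (A B : Finset (Fin n)) (op : Fin n → T.Op)
    (hdisc : ∀ j, T.RSet q0 op A j ∩ T.RSet q0 op B j = ∅)
    (op' : Fin (n - 2) → T.Op)
    (hop' : ∀ i : Fin (n - 2), op' i = op (Fin.castLE (by omega) i))
    (A' B' : Finset (Fin (n - 2)))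
    (hA'def : ∀ i : Fin (n - 2), i ∈ A' ↔ Fin.castLE (by omega) i ∈ A)
    (hB'def : ∀ i : Fin (n - 2), i ∈ B' ↔ Fin.castLE (by omega) i ∈ B)
    (hA'ne : A'.Nonempty) (hB'ne : B'.Nonempty)
    (hAhigh : 1 < A.card → ∃ i ∈ A, n - 2 ≤ (i : ℕ))
    (hBhigh : 1 < B.card → ∃ i ∈ B, n - 2 ≤ (i : ℕ)) :
    T.QSet q0 op' A' ∩ T.QSet q0 op' B' = ∅ ∧
    (q0 ∉ T.QSet q0 op' A' ∨ B'.card = 1) ∧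
    (q0 ∉ T.QSet q0 op' B' ∨ A'.card = 1) := by
  have h : n - 2 ≤ n := Nat.sub_le n 2
  have hA : ∀ i ∈ A', Fin.castLE h i ∈ A := fun i => (hA'def i).1
  have hB : ∀ i ∈ B', Fin.castLE h i ∈ B := fun i => (hB'def i).1
  have hdisc' : ∀ j, T.RSet q0 op B j ∩ T.RSet q0 op A j = ∅ := fun j =>
    (Set.inter_comm _ _).trans (hdisc j)
  exact ⟨QSet_castLE_inter_eq_empty h (by omega) hop' (hdisc _) hA hB,
    notMem_QSet_castLE_or_card_eq_one h hop' hdisc hA hB hB'ne hBhigh,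
    notMem_QSet_castLE_or_card_eq_one h hop' hdisc' hB hA hA'ne hAhigh⟩
end

section
/- If a deterministic type is 3-discerning, then it is 2-recording. Specifically, suppose q0, teams A = {1} and B = {2,3}, and operations op_1, op_2, op_3 witness the 3-discerning property. Then q0, teams A' = {1}, B' = {2}, and operations op_1, op_2 witness the 2-recording property: since both teams have size 1, only the condition Q_{A'} ∩ Q_{B'} = ∅ needs to be verified, and it follows because any common state q, extended by applying op_3, would yield a pair in R_{A,3} ∩ R_{B,3}. -/
open DetType

namespace DetType

variable (T : DetType) {n : ℕ} (q0 : T.State)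

theorem RSet_mono (op : Fin n → T.Op) {X Y : Finset (Fin n)} (hXY : X ⊆ Y) (j : Fin n) :
    T.RSet q0 op X j ⊆ T.RSet q0 op Y j := by
  rintro p ⟨l1, l2, hnd, ⟨i, hi, hhead⟩, hresp, hstate⟩
  exact ⟨l1, l2, hnd, ⟨i, hXY hi, hhead⟩, hresp, hstate⟩

theorem mem_RSet_last_of_mem_QSet (op : Fin (n + 1) → T.Op) {X : Finset (Fin n)}
    {q : T.State} (hq : q ∈ T.QSet q0 (op ∘ Fin.castSucc) X) :
    ((T.tr (op (Fin.last n)) q).2, (T.tr (op (Fin.last n)) q).1) ∈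
      T.RSet q0 op (X.map Fin.castSuccEmb) (Fin.last n) := by
  obtain ⟨l, hnd, ⟨i, hi, hhead⟩, rfl⟩ := hq
  obtain ⟨l', rfl⟩ : ∃ l', l = i :: l' := by
    cases l with
    | nil => simp at hhead
    | cons a l' => exact ⟨l', by simpa using hhead⟩
  refine ⟨(i :: l').map Fin.castSucc, [], ?_, ⟨i.castSucc, by simpa using hi, rfl⟩, ?_, ?_⟩
  · have hlast : Fin.last n ∉ (i :: l').map Fin.castSucc := by
      simp only [List.mem_map, not_exists, not_and]
      exact fun k _ => (Fin.castSucc_lt_last k).ne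
    rw [← List.concat_eq_append, List.nodup_concat]
    exact ⟨hlast, hnd.map (Fin.castSucc_injective n)⟩
  · simp [List.map_map]
  · simp [applySeq, List.map_map]

end DetType

/-- If a deterministic type is 3-discerning with teams A = {1}, B = {2,3}, then
the restriction to the first two processes witnesses the 2-recording property:
`Q_{A'} ∩ Q_{B'} = ∅` (the other two conditions are vacuous for singleton teams). -/
theorem stmt4 (T : DetType) (q0 : T.State) (op : Fin 3 → T.Op)
    (hdisc : ∀ j, T.RSet q0 op ({0} : Finset (Fin 3)) j ∩
      T.RSet q0 op ({1, 2} : Finset (Fin 3)) j = ∅)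
    (op' : Fin 2 → T.Op) (h1 : op' 0 = op 0) (h2 : op' 1 = op 1) :
    T.QSet q0 op' ({0} : Finset (Fin 2)) ∩ T.QSet q0 op' ({1} : Finset (Fin 2)) = ∅ := by
  obtain rfl : op' = op ∘ Fin.castSucc := by
    funext i
    fin_cases i
    exacts [h1, h2]
  refine Set.eq_empty_of_forall_notMem fun q ⟨hA, hB⟩ => ?_
  have hRA := T.RSet_mono q0 op (Y := {0}) (by decide) 2 (T.mem_RSet_last_of_mem_QSet q0 op hA)
  have hRB := T.RSet_mono q0 op (Y := {1, 2}) (by decide) 2 (T.mem_RSet_last_of_mem_QSet q0 op hB)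
  exact (hdisc 2).subset ⟨hRA, hRB⟩
end

section
/- For all n ≥ 4, the type T_n is n-discerning: take initial state q0 = (⊥,0,0), team A of ⌊n/2⌋ processes each assigned operation op_A, and team B of ⌈n/2⌉ processes each assigned operation op_B. Then for every j, R_{A,j} consists only of pairs whose response component is 𝔸 and R_{B,j} consists only of pairs whose response component is 𝔹, hence R_{A,j} ∩ R_{B,j} = ∅. -/
open DetType

/-- States of the type `T_n`: `none` is the state (⊥,0,0); `some (w,r,c)` has
winner `w` (`true` = 𝔸, `false` = 𝔹), row `r` and column `c`. -/
abbrev TnState := Option (Bool × ℕ × ℕ)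

/-- Transitions of `T_n`.  The operation `true` is `op_A`, `false` is `op_B`.
Responses are `true` = 𝔸, `false` = 𝔹. -/
def TnTr (n : ℕ) : Bool → TnState → TnState × Bool
  | true, none => (some (true, 0, 0), true)
  | true, some (w, r, c) =>
      (if (c + 1) % (n / 2) = 0 then none else some (w, r, (c + 1) % (n / 2)), w)
  | false, none => (some (false, 0, 0), false)
  | false, some (w, r, c) =>
      (if (r + 1) % ((n + 1) / 2) = 0 then none else some (w, (r + 1) % ((n + 1) / 2), c), w)

/-- The type `T_n`. -/
def Tn (n : ℕ) : DetType := ⟨TnState, Bool, Bool, TnTr n⟩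

/-- The valid states of `T_n`: row below ⌈n/2⌉ and column below ⌊n/2⌋. -/
def TnValid (n : ℕ) : TnState → Prop
  | none => True
  | some (_, r, c) => r < (n + 1) / 2 ∧ c < n / 2

/-!
Start from `(⊥,0,0)` with an `op_A`: it makes 𝔸 the winner, and 𝔸 stays the winner until a reset.
The column counter cannot wrap, as there are only `⌊n/2⌋` processes performing `op_A`, so a reset
needs the row counter to wrap, which takes every one of the `⌈n/2⌉` operations `op_B`. After it
only `op_A`s remain, and the next one makes 𝔸 the winner again. Hence every response is 𝔸. A run
starting with `op_B` is the mirror image, exchanging rows with columns and 𝔸 with 𝔹.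
-/

/-- `T_n` with column modulus `p` and row modulus `q` in place of `n / 2` and `(n + 1) / 2`, so
that `Tn n` is definitionally `twoCounter (n / 2) ((n + 1) / 2)`. Freeing the moduli lets
`mirror` exchange the roles of the two operations. -/
def twoCounterTr (p q : ℕ) : Bool → TnState → TnState × Bool
  | true, none => (some (true, 0, 0), true)
  | true, some (w, r, c) =>
      (if (c + 1) % p = 0 then none else some (w, r, (c + 1) % p), w)
  | false, none => (some (false, 0, 0), false)
  | false, some (w, r, c) =>
      (if (r + 1) % q = 0 then none else some (w, (r + 1) % q, c), w)

abbrev twoCounter (p q : ℕ) : DetType := ⟨TnState, Bool, Bool, twoCounterTr p q⟩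

theorem DetType.applySeq_append_singleton (T : DetType) (l : List T.Op) (o : T.Op)
    (s : T.State) : T.applySeq (l ++ [o]) s = (T.tr o (T.applySeq l s)).1 := by
  simp only [applySeq, List.foldl_append, List.foldl_cons, List.foldl_nil]

theorem List.Nodup.count_map_le_card {α β : Type*} [Fintype α] [DecidableEq α] [DecidableEq β]
    {l : List α} (hl : l.Nodup) (f : α → β) (b : β) :
    (l.map f).count b ≤ (Finset.univ.filter fun a => f a = b).card := by
  rw [List.count_eq_countP, List.countP_map, List.countP_eq_length_filter,
    ← List.toFinset_card_of_nodup (hl.filter _)]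
  exact Finset.card_le_card fun a => by simp

namespace twoCounter

variable {p q : ℕ}

def mirror : TnState → TnState := Option.map fun (w, r, c) => (!w, c, r)

theorem tr_mirror (o : Bool) (s : TnState) :
    (twoCounter q p).tr (!o) (mirror s) = Prod.map mirror not ((twoCounter p q).tr o s) := by
  rcases s with _ | ⟨w, r, c⟩ <;> cases o <;>
    simp only [twoCounterTr, mirror, Bool.not_false, Bool.not_true, Option.map_none,
      Option.map_some, Prod.map_apply, Prod.mk.injEq, and_true] <;>
    split_ifs <;> rfl

theorem applySeq_mirror (os : List Bool) (s : TnState) :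
    (twoCounter q p).applySeq (os.map not) (mirror s) =
      mirror ((twoCounter p q).applySeq os s) := by
  induction os generalizing s with
  | nil => rfl
  | cons o os ih =>
    change (twoCounter q p).applySeq (os.map not) ((twoCounter q p).tr (!o) (mirror s)).1 =
      mirror ((twoCounter p q).applySeq os ((twoCounter p q).tr o s).1)
    rw [tr_mirror]
    exact ih _

theorem applySeq_eq_none_or_winner_true {os : List Bool} (hhead : os.head? = some true)
    (hA : os.count true ≤ p) (hB : os.count false ≤ q) :
    ((twoCounter p q).applySeq os none = none ∧ q ≤ os.count false) ∨
      ∃ r c, (twoCounter p q).applySeq os none = some (true, r, c) ∧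
        r ≤ os.count false ∧ c < os.count true := by
  induction os using List.reverseRecOn with
  | nil => simp at hhead
  | append_singleton os o ih =>
    rw [applySeq_append_singleton]
    by_cases hnil : os = []
    · subst hnil
      obtain rfl : o = true := by simpa using hhead
      exact .inr ⟨0, 0, rfl, by simp, by simp⟩
    rw [List.head?_append_of_ne_nil _ hnil] at hhead
    have hmono (b : Bool) : os.count b ≤ (os ++ [o]).count b :=
      (List.sublist_append_left os [o]).count_le b
    rcases ih hhead ((hmono true).trans hA) ((hmono false).trans hB) with
      ⟨hs, hq⟩ | ⟨r, c, hs, hr, hc⟩ <;> rw [hs] <;> cases o <;>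
      simp only [List.count_append, List.count_singleton, beq_true, beq_false, Bool.not_true,
        Bool.not_false, Bool.false_eq_true, reduceIte, add_zero] at hA hB ⊢
    · omega
    · exact .inr ⟨0, 0, rfl, by omega, by omega⟩
    · by_cases hwrap : r + 1 = q
      · exact .inl ⟨by simp [twoCounterTr, hwrap], by omega⟩
      · have : (r + 1) % q = r + 1 := Nat.mod_eq_of_lt (by omega)
        right; exact ⟨r + 1, c, by simp [twoCounterTr, this], by omega, hc⟩
    · have : (c + 1) % p = c + 1 := Nat.mod_eq_of_lt (by omega)
      right; exact ⟨r, c + 1, by simp [twoCounterTr, this], hr, by omega⟩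

theorem response_eq_true_of_head {pre : List Bool} {o : Bool}
    (hhead : (pre ++ [o]).head? = some true)
    (hA : (pre ++ [o]).count true ≤ p) (hB : (pre ++ [o]).count false ≤ q) :
    ((twoCounter p q).tr o ((twoCounter p q).applySeq pre none)).2 = true := by
  by_cases hnil : pre = []
  · subst hnil
    obtain rfl : o = true := by simpa using hhead
    rfl
  rw [List.head?_append_of_ne_nil _ hnil] at hhead
  have hmono (b : Bool) : pre.count b ≤ (pre ++ [o]).count b :=
    (List.sublist_append_left pre [o]).count_le b
  rcases applySeq_eq_none_or_winner_true (p := p) (q := q) hhead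
    ((hmono true).trans hA) ((hmono false).trans hB) with ⟨hs, hq⟩ | ⟨r, c, hs, -, -⟩
  · rw [hs]
    cases o
    · simp [List.count_append] at hB
      omega
    · rfl
  · rw [hs]
    cases o <;> rfl

theorem response_eq_of_head {pre : List Bool} {o w : Bool}
    (hhead : (pre ++ [o]).head? = some w)
    (hA : (pre ++ [o]).count true ≤ p) (hB : (pre ++ [o]).count false ≤ q) :
    ((twoCounter p q).tr o ((twoCounter p q).applySeq pre none)).2 = w := by
  have count_map_not (b : Bool) (l : List Bool) : (l.map not).count (!b) = l.count b :=
    l.count_map_of_injective not Bool.not_injective b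
  have hmap : pre.map not ++ [!o] = (pre ++ [o]).map not := by simp
  cases w
  · have := response_eq_true_of_head (p := q) (q := p) (pre := pre.map not) (o := !o)
      (by rw [hmap, List.head?_map, hhead]; rfl)
      (by rw [hmap]; exact (count_map_not false _).trans_le hB)
      (by rw [hmap]; exact (count_map_not true _).trans_le hA)
    rw [show (none : TnState) = mirror none from rfl, applySeq_mirror, tr_mirror] at this
    simpa using this
  · exact response_eq_true_of_head hhead hA hB

theorem fst_eq_of_mem_RSet {n : ℕ} (op : Fin n → Bool) (X : Finset (Fin n)) (w : Bool)
    (hX : ∀ i ∈ X, op i = w)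
    (hA : (Finset.univ.filter fun i => op i = true).card ≤ p)
    (hB : (Finset.univ.filter fun i => op i = false).card ≤ q) (j : Fin n) :
    ∀ x ∈ (twoCounter p q).RSet none op X j, x.1 = w := by
  rintro x ⟨l1, l2, hnd, ⟨i, hiX, hhead⟩, hresp, -⟩
  have hnd' : (l1 ++ [j]).Nodup := hnd.sublist (by simp)
  rw [hresp]
  apply response_eq_of_head <;> rw [show [op j] = [j].map op from rfl, ← List.map_append]
  · cases l1 <;> simp_all
  · exact (hnd'.count_map_le_card op true).trans hA
  · exact (hnd'.count_map_le_card op false).trans hB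

end twoCounter

theorem stmt5_general (n : ℕ) :
    let A : Finset (Fin n) := Finset.univ.filter (fun i => (i : ℕ) < n / 2)
    let B : Finset (Fin n) := Finset.univ.filter (fun i => ¬ (i : ℕ) < n / 2)
    let op : Fin n → (Tn n).Op := fun i => decide ((i : ℕ) < n / 2)
    let q0 : (Tn n).State := none
    (∀ j, ∀ p ∈ (Tn n).RSet q0 op A j, p.1 = true) ∧
    (∀ j, ∀ p ∈ (Tn n).RSet q0 op B j, p.1 = false) ∧
    (∀ j, (Tn n).RSet q0 op A j ∩ (Tn n).RSet q0 op B j = ∅) := by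
  intro A B op q0
  have hA :
      (Finset.univ.filter fun i : Fin n => decide ((i : ℕ) < n / 2) = true).card ≤ n / 2 := by
    simp [Fin.card_filter_val_lt]
  have hB : (Finset.univ.filter fun i : Fin n => decide ((i : ℕ) < n / 2) = false).card ≤
      (n + 1) / 2 := by
    have := Finset.card_filter_add_card_filter_not (s := Finset.univ)
      fun i : Fin n => (i : ℕ) < n / 2
    simp only [Fin.card_filter_val_lt, Finset.card_univ, Fintype.card_fin] at this
    simp only [decide_eq_false_iff_not]
    omega
  have respA := twoCounter.fst_eq_of_mem_RSet op A true (by simp [A, op]) hA hB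
  have respB := twoCounter.fst_eq_of_mem_RSet op B false (by simp [B, op]) hA hB
  refine ⟨respA, respB, fun j => Set.eq_empty_of_forall_notMem fun x hx => ?_⟩
  simpa [respA j x hx.1] using respB j x hx.2

/-- For n ≥ 4, `T_n` is n-discerning: with `q0 = (⊥,0,0)`, team A the ⌊n/2⌋
processes assigned `op_A` and team B the ⌈n/2⌉ processes assigned `op_B`, every
pair in `R_{A,j}` has response 𝔸, every pair in `R_{B,j}` has response 𝔹, so
`R_{A,j} ∩ R_{B,j} = ∅` for every `j`. -/
theorem stmt5 (n : ℕ) (hn : 4 ≤ n) :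
    let A : Finset (Fin n) := Finset.univ.filter (fun i => (i : ℕ) < n / 2)
    let B : Finset (Fin n) := Finset.univ.filter (fun i => ¬ (i : ℕ) < n / 2)
    let op : Fin n → (Tn n).Op := fun i => decide ((i : ℕ) < n / 2)
    let q0 : (Tn n).State := none
    (∀ j, ∀ p ∈ (Tn n).RSet q0 op A j, p.1 = true) ∧
    (∀ j, ∀ p ∈ (Tn n).RSet q0 op B j, p.1 = false) ∧
    (∀ j, (Tn n).RSet q0 op A j ∩ (Tn n).RSet q0 op B j = ∅) :=
  stmt5_general n
end

section
/- For all n ≥ 2, the type S_n is n-recording, witnessed by q0 = (𝔹,0), team A = {1} with op_1 = op_A, team B = {2,...,n} with op_2 = ... = op_n = op_B. With this witness, Q_A = {(𝔸,row) : 0 ≤ row < n} and Q_B = {(𝔹,row) : 0 ≤ row < n}, so Q_A ∩ Q_B = ∅ and the initial-state conditions hold (since |A| = 1 handles q0 ∈ Q_B). -/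
open DetType

/-- Transitions of the type `S_n`.  States are pairs (winner, row) with `true` = 𝔸,
`false` = 𝔹.  The operation `true` is `op_A`, `false` is `op_B`; both return ack. -/
def SnTr (n : ℕ) : Bool → Bool × ℕ → (Bool × ℕ) × Unit
  | true, (w, r) => (if (w, r) = (false, 0) then (true, 0) else (false, 0), ())
  | false, (w, r) => (if (r + 1) % n = 0 then (false, 0) else (w, (r + 1) % n), ())

/-- The type `S_n`. -/
def Sn (n : ℕ) : DetType := ⟨Bool × ℕ, Bool, Unit, SnTr n⟩
/-!
Distinct indices mean that `op_A` is applied at most once and at most `n` operations are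
applied, so the row never wraps around. A schedule starting with `op_A` moves `(𝔹, 0)` to
`(𝔸, 0)` and then only advances the row. A schedule starting with `op_B` leaves the winner 𝔹:
by the time `op_A` comes, if ever, the row is nonzero, so `op_A` resets the state to `(𝔹, 0)`.
-/

theorem List.map_decide_eq_replicate_false {α : Type*} [DecidableEq α] {z : α} {l : List α}
    (hz : z ∉ l) : l.map (fun i => decide (i = z)) = List.replicate l.length false :=
  List.map_eq_replicate_iff.mpr fun _ hi => decide_eq_false (ne_of_mem_of_not_mem hi hz)

theorem List.Nodup.length_lt_card {α : Type*} [Fintype α] {z : α} {l : List α}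
    (hl : l.Nodup) (hz : z ∉ l) : l.length < Fintype.card α :=
  (List.nodup_cons.mpr ⟨hz, hl⟩).length_le_card

theorem List.exists_nodup_notMem_length_eq {α : Type*} [Fintype α] [DecidableEq α] (z : α)
    {r : ℕ} (hr : r < Fintype.card α) :
    ∃ l : List α, l.Nodup ∧ z ∉ l ∧ l.length = r := by
  obtain ⟨s, hs, rfl⟩ := Finset.exists_subset_card_eq
    (show r ≤ (Finset.univ.erase z).card by
      rw [Finset.card_erase_of_mem (Finset.mem_univ z), Finset.card_univ]; omega)
  exact ⟨s.toList, s.nodup_toList, fun h => by simpa using hs (Finset.mem_toList.mp h),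
    s.length_toList⟩

namespace Sn

variable {n : ℕ}

/-- `(Sn n).applySeq` typed at `Bool` and `Bool × ℕ`: rewriting does not see through `Sn`. -/
def run (n : ℕ) (l : List Bool) (q : Bool × ℕ) : Bool × ℕ :=
  l.foldl (fun s o => (SnTr n o s).1) q

theorem qSet_eq_run (q0 : Bool × ℕ) (op : Fin n → Bool) (X : Finset (Fin n)) :
    (Sn n).QSet q0 op X =
      { q | ∃ l : List (Fin n), l.Nodup ∧ (∃ i ∈ X, l.head? = some i) ∧
        run n (l.map op) q0 = q } :=
  rfl

theorem run_cons (o : Bool) (l : List Bool) (q : Bool × ℕ) :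
    run n (o :: l) q = run n l (SnTr n o q).1 := rfl

theorem run_append (l₁ l₂ : List Bool) (q : Bool × ℕ) :
    run n (l₁ ++ l₂) q = run n l₂ (run n l₁ q) :=
  List.foldl_append ..

theorem opA_initial : (SnTr n true (false, 0)).1 = (true, 0) := by
  simp [SnTr]

theorem opA_of_ne_zero {r : ℕ} (hr : r ≠ 0) : (SnTr n true (false, r)).1 = (false, 0) := by
  simp [SnTr, hr]

theorem opB_of_lt {w : Bool} {r : ℕ} (h : r + 1 < n) : (SnTr n false (w, r)).1 = (w, r + 1) := by
  simp [SnTr, Nat.mod_eq_of_lt h]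

theorem run_replicate_opB {w : Bool} {r k : ℕ} (h : r + k < n) :
    run n (List.replicate k false) (w, r) = (w, r + k) := by
  induction k generalizing r with
  | zero => rfl
  | succ k ih =>
    rw [List.replicate_succ, run_cons, opB_of_lt (by omega), ih (by omega)]
    congr 1
    omega

theorem run_opA_replicate_opB {b : ℕ} (hb : b < n) :
    run n (true :: List.replicate b false) (false, 0) = (true, b) := by
  rw [run_cons, opA_initial, run_replicate_opB (by omega), zero_add]

theorem run_replicate_opB_opA_replicate_opB {a b : ℕ} (ha : 0 < a) (ha' : a < n) (hb : b < n) :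
    run n (List.replicate a false ++ true :: List.replicate b false) (false, 0) = (false, b) := by
  rw [run_append, run_replicate_opB (by omega), zero_add, run_cons, opA_of_ne_zero ha.ne',
    run_replicate_opB (by omega), zero_add]

theorem qSet_singleton (z : Fin n) :
    (Sn n).QSet (false, 0) (fun i => decide (i = z)) {z} = { q | ∃ r < n, q = (true, r) } := by
  rw [qSet_eq_run]
  ext q
  constructor
  · rintro ⟨_ | ⟨a, t⟩, hnd, ⟨i, hi, hhead⟩, rfl⟩
    · simp at hhead
    obtain rfl : a = z := by simpa [Finset.mem_singleton.mp hi] using hhead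
    obtain ⟨hzt, ht⟩ := List.nodup_cons.mp hnd
    have hlen : t.length < n := by simpa using ht.length_lt_card hzt
    refine ⟨t.length, hlen, ?_⟩
    rw [List.map_cons, decide_eq_true rfl, List.map_decide_eq_replicate_false hzt,
      run_opA_replicate_opB hlen]
  · rintro ⟨r, hr, rfl⟩
    obtain ⟨l, hl, hzl, rfl⟩ := List.exists_nodup_notMem_length_eq z (by simpa using hr)
    refine ⟨z :: l, List.nodup_cons.mpr ⟨hzl, hl⟩, ⟨z, Finset.mem_singleton_self z, rfl⟩,
      ?_⟩
    rw [List.map_cons, decide_eq_true rfl, List.map_decide_eq_replicate_false hzl,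
      run_opA_replicate_opB hr]

theorem qSet_filter_ne_subset (z : Fin n) :
    (Sn n).QSet (false, 0) (fun i => decide (i = z)) (Finset.univ.filter (fun i => i ≠ z))
      ⊆ { q | ∃ r < n, q = (false, r) } := by
  rw [qSet_eq_run]
  rintro _ ⟨l, hnd, ⟨i, hi, hhead⟩, rfl⟩
  have hiz : i ≠ z := (Finset.mem_filter.mp hi).2
  by_cases hzl : z ∈ l
  · obtain ⟨s, t, rfl⟩ := List.append_of_mem hzl
    obtain ⟨hzst, hst⟩ := List.nodup_cons.mp (List.nodup_middle.mp hnd)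
    have hlen : s.length + t.length < n := by simpa using hst.length_lt_card hzst
    have hs : s ≠ [] := by rintro rfl; exact hiz (by simpa using hhead.symm)
    rw [List.mem_append, not_or] at hzst
    refine ⟨t.length, by omega, ?_⟩
    rw [List.map_append, List.map_cons, decide_eq_true rfl,
      List.map_decide_eq_replicate_false hzst.1, List.map_decide_eq_replicate_false hzst.2,
      run_replicate_opB_opA_replicate_opB (List.length_pos_iff.mpr hs) (by omega) (by omega)]
  · have hlen : l.length < n := by simpa using hnd.length_lt_card hzl
    refine ⟨l.length, hlen, ?_⟩
    rw [List.map_decide_eq_replicate_false hzl, run_replicate_opB (by omega), zero_add]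

theorem subset_qSet_filter_ne (hn : 2 ≤ n) (z : Fin n) :
    { q | ∃ r < n, q = (false, r) }
      ⊆ (Sn n).QSet (false, 0) (fun i => decide (i = z))
        (Finset.univ.filter (fun i => i ≠ z)) := by
  rw [qSet_eq_run]
  rintro _ ⟨r, hr, rfl⟩
  have head_mem {l : List (Fin n)} (hzl : z ∉ l) (hne : l ≠ []) :
      ∃ i ∈ Finset.univ.filter (fun i => i ≠ z), l.head? = some i :=
    ⟨l.head hne, Finset.mem_filter.mpr ⟨Finset.mem_univ _,
      ne_of_mem_of_not_mem (List.head_mem hne) hzl⟩, List.head?_eq_some_head hne⟩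
  rcases Nat.eq_zero_or_pos r with rfl | hr0
  · -- `(𝔹, 0)` is only reached by an `op_A` that overwrites a nonzero row
    obtain ⟨l, hl, hzl, hl1⟩ := List.exists_nodup_notMem_length_eq z (r := 1)
      (by rw [Fintype.card_fin]; omega)
    have hne : l ≠ [] := List.ne_nil_of_length_pos (by omega)
    refine ⟨l ++ [z], hl.append (List.nodup_singleton z) (by simpa using hzl),
      by simpa [List.head?_append_of_ne_nil _ hne] using head_mem hzl hne, ?_⟩
    rw [List.map_append, List.map_singleton, decide_eq_true rfl,
      List.map_decide_eq_replicate_false hzl, hl1]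
    exact run_replicate_opB_opA_replicate_opB (b := 0) one_pos hn hr
  · obtain ⟨l, hl, hzl, rfl⟩ := List.exists_nodup_notMem_length_eq z (by simpa using hr)
    refine ⟨l, hl, head_mem hzl (List.ne_nil_of_length_pos hr0), ?_⟩
    rw [List.map_decide_eq_replicate_false hzl, run_replicate_opB (by omega), zero_add]

theorem qSet_filter_ne (hn : 2 ≤ n) (z : Fin n) :
    (Sn n).QSet (false, 0) (fun i => decide (i = z)) (Finset.univ.filter (fun i => i ≠ z))
      = { q | ∃ r < n, q = (false, r) } :=
  (qSet_filter_ne_subset z).antisymm (subset_qSet_filter_ne hn z)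

end Sn

/-- For n ≥ 2, `S_n` is n-recording, witnessed by `q0 = (𝔹,0)`, team A = {1} with
op_A, team B = {2,...,n} with op_B.  With this witness `Q_A = {(𝔸,r) : r < n}`,
`Q_B = {(𝔹,r) : r < n}`, hence `Q_A ∩ Q_B = ∅`, and the two initial-state
conditions hold. -/
theorem stmt7 (n : ℕ) (hn : 2 ≤ n) :
    let z : Fin n := ⟨0, by omega⟩
    let A : Finset (Fin n) := {z}
    let B : Finset (Fin n) := Finset.univ.filter (fun i => i ≠ z)
    let op : Fin n → (Sn n).Op := fun i => decide (i = z)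
    let q0 : (Sn n).State := (false, 0)
    (Sn n).QSet q0 op A = { q | ∃ r < n, q = (true, r) } ∧
    (Sn n).QSet q0 op B = { q | ∃ r < n, q = (false, r) } ∧
    (Sn n).QSet q0 op A ∩ (Sn n).QSet q0 op B = ∅ ∧
    (q0 ∉ (Sn n).QSet q0 op A ∨ B.card = 1) ∧
    (q0 ∉ (Sn n).QSet q0 op B ∨ A.card = 1) := by
  intro z A B op q0
  have hQA : (Sn n).QSet q0 op A = { q | ∃ r < n, q = (true, r) } := Sn.qSet_singleton z
  have hQB : (Sn n).QSet q0 op B = { q | ∃ r < n, q = (false, r) } := Sn.qSet_filter_ne hn z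
  refine ⟨hQA, hQB, ?_, Or.inl ?_, Or.inr (Finset.card_singleton z)⟩
  · rw [hQA, hQB, Set.eq_empty_iff_forall_notMem]
    rintro _ ⟨⟨r, -, rfl⟩, ⟨r', -, h⟩⟩
    simp at h
  · rw [hQA]
    rintro ⟨r, -, h⟩
    simp [q0] at h
end
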